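/- For every positive integer r, the 3-independence number of the Hamming graph H(d,2) with d = 2^r satisfies α₃(H(2^r, 2)) = 2^{2^r − 1 − r} (that is, α₃(H(d,2)) = 2^{d−1}/d for d = 2^r). -/

import Mathlib

open Finset Function

/-! ### Auxiliary lemmas: sphere-packing upper bound -/

/-- Puncturing (deleting the last coordinate) decreases Hamming distance by at most 1. -/
lemma hamming_dist_le_punct (m : ℕ) (x y : Fin (m+2) → Fin 2) :
    hammingDist x y ≤ hammingDist (fun i : Fin (m+1) => x i.castSucc)
      (fun i : Fin (m+1) => y i.castSucc) + 1 := by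
  classical
  unfold hammingDist
  have hsub : ({i : Fin (m+2) | x i ≠ y i} : Finset _) ⊆
      insert (Fin.last (m+1))
        (({i : Fin (m+1) | x i.castSucc ≠ y i.castSucc} : Finset _).image Fin.castSucc) := by
    intro i hi
    simp only [mem_filter, mem_univ, true_and] at hi
    by_cases h : i = Fin.last (m+1)
    · subst h; exact mem_insert_self _ _
    · refine mem_insert_of_mem ?_
      refine mem_image.2 ⟨i.castPred h, ?_, Fin.castSucc_castPred i h⟩
      simp [Fin.castSucc_castPred i h, hi]
  calc ({i : Fin (m+2) | x i ≠ y i} : Finset _).card ≤ _ := card_le_card hsub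
    _ ≤ (({i : Fin (m+1) | x i.castSucc ≠ y i.castSucc} : Finset _).image Fin.castSucc).card + 1 :=
        card_insert_le _ _
    _ ≤ _ := Nat.add_le_add_right Finset.card_image_le 1

/-- flip a bit -/
def bflip (a : Fin 2) : Fin 2 := if a = 0 then 1 else 0

/-- A Hamming ball of radius 1 in `Fin (m+1) → Fin 2` has exactly `m + 2` elements. -/
lemma hamming_ball_card (m : ℕ) (c : Fin (m+1) → Fin 2) :
    ((Finset.univ : Finset (Fin (m+1) → Fin 2)).filter fun z => hammingDist z c ≤ 1).card
      = m + 2 := by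
  classical
  have hflip : ∀ a b : Fin 2, a ≠ b ↔ a = bflip b := by decide
  have hne : ∀ a : Fin 2, bflip a ≠ a := by decide
  have hset : ((Finset.univ : Finset (Fin (m+1) → Fin 2)).filter fun z => hammingDist z c ≤ 1)
      = insert c ((Finset.univ : Finset (Fin (m+1))).image
          fun i => Function.update c i (bflip (c i))) := by
    ext z
    simp only [mem_filter, mem_univ, true_and, mem_insert, mem_image]
    constructor
    · intro hz
      rcases Nat.le_one_iff_eq_zero_or_eq_one.1 hz with h0 | h1
      · exact Or.inl (eq_of_hammingDist_eq_zero h0)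
      · right
        have hcard : ({i : Fin (m+1) | z i ≠ c i} : Finset _).card = 1 := h1
        obtain ⟨i, hi⟩ := Finset.card_eq_one.1 hcard
        refine ⟨i, ?_⟩
        funext j
        by_cases hj : j = i
        · subst hj
          have : z j ≠ c j := by
            have : j ∈ ({i : Fin (m+1) | z i ≠ c i} : Finset _) := hi ▸ mem_singleton_self j
            simpa using this
          simp [Function.update_self, (hflip _ _).1 this]
        · have : z j = c j := by
            by_contra hne'
            have : j ∈ ({i : Fin (m+1) | z i ≠ c i} : Finset _) := by simpa using hne'
            rw [hi, mem_singleton] at this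
            exact hj this
          simp [Function.update_of_ne hj, this]
    · rintro (rfl | ⟨i, rfl⟩)
      · simp
      · have : ({j : Fin (m+1) | Function.update c i (bflip (c i)) j ≠ c j} : Finset _) ⊆ {i} := by
          intro j hj
          simp only [mem_filter, mem_univ, true_and] at hj
          by_contra hji
          rw [mem_singleton] at hji
          exact hj (by simp [Function.update_of_ne hji])
        calc hammingDist (Function.update c i (bflip (c i))) c
            = _ := rfl
          _ ≤ ({i} : Finset (Fin (m+1))).card := card_le_card this
          _ = 1 := card_singleton i
  have hnm : c ∉ (Finset.univ : Finset (Fin (m+1))).image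
      fun i => Function.update c i (bflip (c i)) := by
    intro hc
    obtain ⟨i, -, hi⟩ := mem_image.1 hc
    have := congrFun hi i
    simp only [Function.update_self] at this
    exact hne (c i) this
  have hinj : Function.Injective fun i => Function.update c i (bflip (c i)) := by
    intro i j hij
    by_contra hne'
    have := congrFun hij i
    simp only [Function.update_self, Function.update_of_ne hne',
      Function.update_of_ne (Ne.symm hne')] at this
    exact hne (c i) this
  rw [hset, card_insert_of_notMem hnm, card_image_of_injective _ hinj, card_univ,
    Fintype.card_fin]

/-- Sphere-packing bound for distance-4 binary codes of length `m + 2`. -/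
lemma hamming_sphere_packing (m : ℕ) (C : Finset (Fin (m+2) → Fin 2))
    (hC : ∀ x ∈ C, ∀ y ∈ C, x ≠ y → 4 ≤ hammingDist x y) :
    C.card * (m + 2) ≤ 2 ^ (m + 1) := by
  classical
  set p : (Fin (m+2) → Fin 2) → (Fin (m+1) → Fin 2) :=
    fun x => fun i => x i.castSucc with hp
  set B : (Fin (m+2) → Fin 2) → Finset (Fin (m+1) → Fin 2) :=
    fun x => (Finset.univ.filter fun z => hammingDist z (p x) ≤ 1) with hB
  have hdisj : ∀ x ∈ C, ∀ y ∈ C, x ≠ y → Disjoint (B x) (B y) := by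
    intro x hx y hy hxy
    rw [Finset.disjoint_left]
    intro z hzx hzy
    simp only [hB, mem_filter, mem_univ, true_and] at hzx hzy
    have h4 : 4 ≤ hammingDist x y := hC x hx y hy hxy
    have h1 : hammingDist x y ≤ hammingDist (p x) (p y) + 1 := hamming_dist_le_punct m x y
    have h2 : hammingDist (p x) (p y) ≤ hammingDist (p x) z + hammingDist z (p y) :=
      hammingDist_triangle _ _ _
    rw [hammingDist_comm (p x) z] at h2
    omega
  calc C.card * (m + 2) = ∑ x ∈ C, (B x).card := by
        rw [Finset.sum_congr rfl fun x _ => hamming_ball_card m (p x)]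
        simp [mul_comm]
    _ = (C.biUnion B).card := (Finset.card_biUnion hdisj).symm
    _ ≤ (Finset.univ : Finset (Fin (m+1) → Fin 2)).card := Finset.card_le_univ _
    _ = 2 ^ (m + 1) := by simp [card_univ]

lemma hamming_sphere_packing' (n m : ℕ) (h : n = m + 2) (C : Finset (Fin n → Fin 2))
    (hC : ∀ x ∈ C, ∀ y ∈ C, x ≠ y → 4 ≤ hammingDist x y) :
    C.card * n ≤ 2 ^ (n - 1) := by
  subst h
  simpa using hamming_sphere_packing m C hC

lemma hamming_upper (r : ℕ) (hr : 1 ≤ r) (C : Finset (Fin (2 ^ r) → Fin 2))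
    (hC : ∀ x ∈ C, ∀ y ∈ C, x ≠ y → 4 ≤ hammingDist x y) :
    C.card ≤ 2 ^ (2 ^ r - 1 - r) := by
  have hlt : r < 2 ^ r := Nat.lt_two_pow_self
  have h2r : 2 ≤ 2 ^ r := by
    calc 2 = 2 ^ 1 := rfl
    _ ≤ 2 ^ r := Nat.pow_le_pow_right (by norm_num) hr
  have key : C.card * 2 ^ r ≤ 2 ^ (2 ^ r - 1) :=
    hamming_sphere_packing' (2 ^ r) (2 ^ r - 2) (by omega) C hC
  have hexp : 2 ^ (2 ^ r - 1) = 2 ^ (2 ^ r - 1 - r) * 2 ^ r := by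
    rw [← pow_add]
    congr 1
    omega
  rw [hexp] at key
  exact Nat.le_of_mul_le_mul_right key (by positivity)

/-! ### Auxiliary lemmas: the extended Hamming code -/

abbrev HWord (r : ℕ) := (Fin r → ZMod 2) → ZMod 2

/-- Parity-check map of the extended Hamming code. -/
def Lmap (r : ℕ) : HWord r →ₗ[ZMod 2] (ZMod 2 × (Fin r → ZMod 2)) where
  toFun c := (∑ v, c v, fun j => ∑ v, c v * v j)
  map_add' a b := by
    refine Prod.ext ?_ ?_
    · simp [Finset.sum_add_distrib]
    · funext j
      simp [Finset.sum_add_distrib, add_mul]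
  map_smul' a c := by
    refine Prod.ext ?_ ?_
    · simp [Finset.mul_sum]
    · funext j
      simp [Finset.mul_sum, mul_assoc]

lemma Lmap_single (r : ℕ) (v : Fin r → ZMod 2) :
    Lmap r (Pi.single v 1) = (1, v) := by
  refine Prod.ext ?_ ?_
  · simp [Lmap, Pi.single_apply]
  · funext j
    simp [Lmap, Pi.single_apply, ite_mul]

lemma Lmap_surjective (r : ℕ) : Function.Surjective (Lmap r) := by
  rintro ⟨a, w⟩
  by_cases ha : a = 1
  · exact ⟨Pi.single w 1, by rw [Lmap_single, ha]⟩
  · have ha0 : a = 0 := (by decide : ∀ b : ZMod 2, b ≠ 1 → b = 0) a ha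
    refine ⟨Pi.single w 1 + Pi.single 0 1, ?_⟩
    rw [map_add, Lmap_single, Lmap_single, ha0]
    refine Prod.ext ?_ ?_
    · show (1 : ZMod 2) + 1 = 0; decide
    · show w + 0 = w; simp

lemma card_kerLmap (r : ℕ) :
    Nat.card (LinearMap.ker (Lmap r)) = 2 ^ (2 ^ r - 1 - r) := by
  classical
  have h1 : Module.finrank (ZMod 2) (HWord r) = 2 ^ r := by
    rw [Module.finrank_pi]
    simp
  have h2 : Module.finrank (ZMod 2) (ZMod 2 × (Fin r → ZMod 2)) = 1 + r := by
    rw [Module.finrank_prod, Module.finrank_self, Module.finrank_pi]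
    simp
  have h3 := LinearMap.finrank_range_add_finrank_ker (Lmap r)
  rw [LinearMap.range_eq_top.2 (Lmap_surjective r), finrank_top, h1, h2] at h3
  have hk : Module.finrank (ZMod 2) (LinearMap.ker (Lmap r)) = 2 ^ r - 1 - r := by
    have hlt : r < 2 ^ r := Nat.lt_two_pow_self
    omega
  have := Module.card_eq_pow_finrank (K := ZMod 2) (V := LinearMap.ker (Lmap r))
  rw [Nat.card_eq_fintype_card, this, hk, ZMod.card]

lemma kerLmap_min_weight (r : ℕ) (c : HWord r) (hc : c ∈ LinearMap.ker (Lmap r))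
    (h0 : c ≠ 0) : 4 ≤ hammingNorm c := by
  classical
  rw [LinearMap.mem_ker] at hc
  set S : Finset (Fin r → ZMod 2) := {v | c v ≠ 0} with hS
  have hone : ∀ v ∈ S, c v = 1 := by
    intro v hv
    simp only [hS, mem_filter, mem_univ, true_and] at hv
    exact (by decide : ∀ b : ZMod 2, b ≠ 0 → b = 1) _ hv
  have hsumS : ∀ f : (Fin r → ZMod 2) → ZMod 2,
      ∑ v, c v * f v = ∑ v ∈ S, f v := by
    intro f
    rw [← Finset.sum_subset (Finset.subset_univ S) (fun v _ hv => by
      have : c v = 0 := by simpa [hS] using hv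
      simp [this])]
    exact Finset.sum_congr rfl fun v hv => by rw [hone v hv, one_mul]
  have hpar : (2 : ℕ) ∣ S.card := by
    have h1 : (Lmap r c).1 = 0 := by rw [hc]; rfl
    have hsum : ∑ v, c v = 0 := h1
    have : (S.card : ZMod 2) = 0 := by
      rw [← hsum]
      have := hsumS (fun _ => 1)
      simp only [mul_one] at this
      rw [this, Finset.sum_const, nsmul_eq_mul, mul_one]
    exact (ZMod.natCast_eq_zero_iff _ 2).1 this
  have hne : S.card ≠ 0 := by
    intro h
    apply h0
    funext v
    have hv : v ∉ S := by rw [Finset.card_eq_zero.1 h]; exact notMem_empty v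
    simpa [hS] using hv
  have hne2 : S.card ≠ 2 := by
    intro h2
    obtain ⟨u, v, huv, hUV⟩ := Finset.card_eq_two.1 h2
    apply huv
    funext j
    have hj : (Lmap r c).2 j = 0 := by rw [hc]; rfl
    have : ∑ w, c w * w j = 0 := hj
    rw [hsumS (fun w => w j), hUV, Finset.sum_pair huv] at this
    exact (by decide : ∀ a b : ZMod 2, a + b = 0 → a = b) _ _ this
  have : hammingNorm c = S.card := rfl
  omega

lemma hammingDist_comp_equiv {ι κ β : Type*} [Fintype ι] [Fintype κ] [DecidableEq β]
    (e : ι ≃ κ) (x y : κ → β) : hammingDist (x ∘ e) (y ∘ e) = hammingDist x y := by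
  unfold hammingDist
  apply Finset.card_bij (fun i _ => e i)
  · intro i hi
    simpa using by simpa using hi
  · intro i _ j _ h
    exact e.injective h
  · intro k hk
    refine ⟨e.symm k, by simpa using by simpa using hk, by simp⟩

/-- Existence of a distance-4 code of size `2 ^ (2 ^ r - 1 - r)` in `H(2^r, 2)`. -/
lemma hamming_lower (r : ℕ) :
    ∃ C : Finset (Fin (2 ^ r) → Fin 2),
      (∀ x ∈ C, ∀ y ∈ C, x ≠ y → 4 ≤ hammingDist x y) ∧
      C.card = 2 ^ (2 ^ r - 1 - r) := by
  classical
  have hcard : Fintype.card (Fin (2 ^ r)) = Fintype.card (Fin r → ZMod 2) := by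
    simp [ZMod.card]
  let e : Fin (2 ^ r) ≃ (Fin r → ZMod 2) := Fintype.equivOfCardEq hcard
  have hfin : (↑(LinearMap.ker (Lmap r)) : Set (HWord r)).Finite := Set.toFinite _
  let C0 : Finset (HWord r) := hfin.toFinset
  have hmem : ∀ c : HWord r, c ∈ C0 ↔ c ∈ LinearMap.ker (Lmap r) := by
    intro c; exact hfin.mem_toFinset
  have hinj : Function.Injective (fun c : HWord r => (c ∘ e : Fin (2 ^ r) → Fin 2)) := by
    intro c c' h
    funext v
    obtain ⟨i, rfl⟩ := e.surjective v
    exact congrFun h i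
  refine ⟨C0.image (fun c => (c ∘ e : Fin (2 ^ r) → Fin 2)), ?_, ?_⟩
  · rintro x hx y hy hxy
    obtain ⟨c, hc, rfl⟩ := mem_image.1 hx
    obtain ⟨c', hc', rfl⟩ := mem_image.1 hy
    have hcc' : c ≠ c' := fun h => hxy (by rw [h])
    have h1 : hammingDist (c ∘ e : Fin (2 ^ r) → Fin 2) (c' ∘ e) = hammingDist c c' :=
      hammingDist_comp_equiv e c c'
    rw [h1, hammingDist_eq_hammingNorm]
    have hker : c - c' ∈ LinearMap.ker (Lmap r) :=
      Submodule.sub_mem _ ((hmem c).1 hc) ((hmem c').1 hc')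
    rw [neg_add_eq_sub]
    exact kerLmap_min_weight r (c' - c) (Submodule.sub_mem _ ((hmem c').1 hc') ((hmem c).1 hc)) (sub_ne_zero_of_ne hcc'.symm)
  · refine (Finset.card_image_of_injective C0 hinj).trans ?_
    have : C0.card = (↑(LinearMap.ker (Lmap r)) : Set (HWord r)).ncard :=
      (Set.ncard_eq_toFinset_card _ hfin).symm
    rw [this, ← Nat.card_coe_set_eq]
    exact card_kerLmap r

/-! ### Main theorem -/

/-- The 3-independence number of the Hamming graph `H(d,q)`: the maximum size of a set
of words of length `d` over an alphabet of size `q` any two distinct members of which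
have Hamming distance at least `4`. -/
noncomputable def hammingAlpha3 (d q : ℕ) : ℕ :=
  sSup {m : ℕ | ∃ C : Finset (Fin d → Fin q),
    (∀ x ∈ C, ∀ y ∈ C, x ≠ y → 4 ≤ hammingDist x y) ∧ C.card = m}

/-- For every positive integer `r`, the hypercube `H(2^r, 2)` satisfies
`α₃(H(2^r,2)) = 2^(2^r - 1 - r)`, i.e. `α₃(H(d,2)) = 2^(d-1)/d` for `d = 2^r`. -/
theorem hamming_alpha3_pow_two (r : ℕ) (hr : 1 ≤ r) :
    hammingAlpha3 (2 ^ r) 2 = 2 ^ (2 ^ r - 1 - r) := by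
  rw [hammingAlpha3]
  apply le_antisymm
  · apply csSup_le'
    rintro m ⟨C, hC, rfl⟩
    exact hamming_upper r hr C hC
  · apply le_csSup
    · refine ⟨2 ^ (2 ^ r - 1 - r), ?_⟩
      rintro m ⟨C, hC, rfl⟩
      exact hamming_upper r hr C hC
    · obtain ⟨C, hC, hcard⟩ := hamming_lower r
      exact ⟨C, hC, hcard⟩
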